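/- For every q ∈ (0,1) and every p ∈ Δ_2, the sequence of iterates (G^n(p))_{n≥1} converges (to a point of the closed simplex). -/

import Mathlib

/-!
Write `x = (a, b, c)`. On the simplex `G₂(x) = b (1 + g)` with `g = (2q - 1) c - a`, the map
commutes with swapping `a` and `b`, and it preserves `a ≤ b`, so we may assume `a ≤ b`.
Under `a ≤ b` the set `{g ≥ 0}` is forward invariant, so along an orbit `b` is antitone until it
enters this set and monotone afterwards; being bounded, it converges to some `M`. If `M = 0` then
`a ≤ b → 0`; otherwise `g = G₂(x) / b - 1 → 0`, which pins down the limit of `a`, and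
`c = 1 - a - b`.
-/

open Filter Topology Function

/-- The map G = (G₁,G₂,G₃) on ℝ³ (with parameter q):
G₁(x) = x₁² + 2q x₁ x₃, G₂(x) = x₂² + 2q x₂ x₃,
G₃(x) = x₃² + 2 x₁ x₂ + 2(1−q) x₁ x₃ + 2(1−q) x₂ x₃. -/
noncomputable def Gmap (q : ℝ) (x : ℝ × ℝ × ℝ) : ℝ × ℝ × ℝ :=
  (x.1 ^ 2 + 2 * q * x.1 * x.2.2,
   x.2.1 ^ 2 + 2 * q * x.2.1 * x.2.2,
   x.2.2 ^ 2 + 2 * x.1 * x.2.1 + 2 * (1 - q) * x.1 * x.2.2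
     + 2 * (1 - q) * x.2.1 * x.2.2)

/-- The open simplex Δ₂ ⊆ ℝ³. -/
def simplex2 : Set (ℝ × ℝ × ℝ) :=
  {p | p.1 + p.2.1 + p.2.2 = 1 ∧ 0 < p.1 ∧ 0 < p.2.1 ∧ 0 < p.2.2}

theorem exists_tendsto_of_monotone_on_forward_invariant {u : ℕ → ℝ} {P : ℕ → Prop}
    {a b : ℝ} (hP : ∀ n, P n → P (n + 1)) (hup : ∀ n, P n → u n ≤ u (n + 1))
    (hdown : ∀ n, ¬P n → u (n + 1) ≤ u n) (hu : ∀ n, u n ∈ Set.Icc a b) :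
    ∃ M, Tendsto u atTop (𝓝 M) := by
  by_cases hN : ∃ N, P N
  · obtain ⟨N, hN⟩ := hN
    have hPN : ∀ n, P (n + N) := fun n ↦ by
      induction n with
      | zero => simpa using hN
      | succ n ih => simpa [Nat.succ_add] using hP _ ih
    have hmono : Monotone fun n ↦ u (n + N) :=
      monotone_nat_of_le_succ fun n ↦ by simpa [Nat.succ_add] using hup _ (hPN n)
    have hbdd : BddAbove (Set.range fun n ↦ u (n + N)) :=
      ⟨b, by rintro _ ⟨n, rfl⟩; exact (hu _).2⟩
    exact ⟨_, (tendsto_add_atTop_iff_nat N).1 (tendsto_atTop_ciSup hmono hbdd)⟩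
  · simp only [not_exists] at hN
    have hanti : Antitone u := antitone_nat_of_succ_le fun n ↦ hdown n (hN n)
    have hbdd : BddBelow (Set.range u) := ⟨a, by rintro _ ⟨n, rfl⟩; exact (hu n).1⟩
    exact ⟨_, tendsto_atTop_ciInf hanti hbdd⟩

theorem tendsto_of_sum_eq_one {α : Type*} {l : Filter α} {x : α → ℝ × ℝ × ℝ} {a b : ℝ}
    (hsum : ∀ i, (x i).1 + (x i).2.1 + (x i).2.2 = 1)
    (ha : Tendsto (fun i ↦ (x i).1) l (𝓝 a)) (hb : Tendsto (fun i ↦ (x i).2.1) l (𝓝 b)) :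
    Tendsto x l (𝓝 (a, b, 1 - a - b)) := by
  have hc : Tendsto (fun i ↦ (x i).2.2) l (𝓝 (1 - a - b)) :=
    ((tendsto_const_nhds.sub ha).sub hb).congr fun i ↦ by linarith [hsum i]
  exact ha.prodMk_nhds (hb.prodMk_nhds hc)

theorem tendsto_zero_of_succ_eq_mul_one_add {u g : ℕ → ℝ} {M : ℝ}
    (hu : ∀ n, u (n + 1) = u n * (1 + g n)) (hM : Tendsto u atTop (𝓝 M)) (hM0 : M ≠ 0) :
    Tendsto g atTop (𝓝 0) := by
  have hratio : Tendsto (fun n ↦ u (n + 1) / u n - 1) atTop (𝓝 (M / M - 1)) :=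
    ((hM.comp (tendsto_add_atTop_nat 1)).div hM hM0).sub_const 1
  rw [div_self hM0, sub_self] at hratio
  refine hratio.congr' ((hM.eventually_ne hM0).mono fun n hn ↦ ?_)
  rw [hu n]
  field_simp
  ring

theorem isClosed_closedSimplex :
    IsClosed {l : ℝ × ℝ × ℝ | l.1 + l.2.1 + l.2.2 = 1 ∧ 0 ≤ l.1 ∧ 0 ≤ l.2.1 ∧ 0 ≤ l.2.2} :=
  (isClosed_eq (by fun_prop) continuous_const).inter <|
    (isClosed_le continuous_const continuous_fst).inter <|
      (isClosed_le continuous_const continuous_snd.fst).inter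
        (isClosed_le continuous_const continuous_snd.snd)

def growthRate (q : ℝ) (x : ℝ × ℝ × ℝ) : ℝ := (2 * q - 1) * x.2.2 - x.1

def swap12 (x : ℝ × ℝ × ℝ) : ℝ × ℝ × ℝ := (x.2.1, x.1, x.2.2)

theorem continuous_swap12 : Continuous swap12 := by
  unfold swap12; fun_prop

theorem swap12_swap12 (x : ℝ × ℝ × ℝ) : swap12 (swap12 x) = x := rfl

theorem swap12_mem_simplex2 {x : ℝ × ℝ × ℝ} (hx : x ∈ simplex2) : swap12 x ∈ simplex2 := by
  obtain ⟨hs, h1, h2, h3⟩ := hx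
  exact ⟨by simp only [swap12]; linarith, h2, h1, h3⟩

section

variable {q : ℝ} {x : ℝ × ℝ × ℝ}

theorem semiconj_swap12_Gmap (q : ℝ) : Semiconj swap12 (Gmap q) (Gmap q) := fun x ↦ by
  simp only [swap12, Gmap, Prod.mk.injEq, true_and]
  ring

theorem mapsTo_Gmap_simplex2 (hq0 : 0 ≤ q) (hq1 : q ≤ 1) :
    Set.MapsTo (Gmap q) simplex2 simplex2 := by
  rintro x ⟨hs, h1, h2, h3⟩
  simp only [simplex2, Gmap, Set.mem_ofPred_eq]
  refine ⟨by linear_combination (x.1 + x.2.1 + x.2.2 + 1) * hs, by positivity, by positivity, ?_⟩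
  have : 0 ≤ 1 - q := by linarith
  positivity

theorem Gmap_fst_le_snd (hq0 : 0 ≤ q) (hx : x ∈ simplex2) (h : x.1 ≤ x.2.1) :
    (Gmap q x).1 ≤ (Gmap q x).2.1 := by
  obtain ⟨-, h1, h2, h3⟩ := hx
  have key : (Gmap q x).2.1 - (Gmap q x).1 = (x.2.1 - x.1) * (x.1 + x.2.1 + 2 * q * x.2.2) := by
    simp only [Gmap]; ring
  rw [← sub_nonneg, key]
  have := sub_nonneg.2 h
  positivity

theorem Gmap_snd_eq (hx : x.1 + x.2.1 + x.2.2 = 1) :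
    (Gmap q x).2.1 = x.2.1 * (1 + growthRate q x) := by
  simp only [Gmap, growthRate]
  linear_combination x.2.1 * hx

theorem growthRate_Gmap (hx : x.1 + x.2.1 + x.2.2 = 1) :
    growthRate q (Gmap q x) = growthRate q x * (1 - 2 * q * x.1 - (2 * q - 1) * x.2.1)
      + 2 * q * x.1 * (x.2.1 - x.1) := by
  obtain ⟨a, b, c⟩ := x
  obtain rfl : c = 1 - a - b := by linarith
  simp only [growthRate, Gmap]
  ring

theorem growthRate_Gmap_nonneg (hq0 : 0 ≤ q) (hq1 : q ≤ 1) (hx : x ∈ simplex2)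
    (h : x.1 ≤ x.2.1) (hg : 0 ≤ growthRate q x) : 0 ≤ growthRate q (Gmap q x) := by
  obtain ⟨hs, h1, h2, h3⟩ := hx
  rw [growthRate_Gmap hs]
  have hg' : x.1 ≤ (2 * q - 1) * x.2.2 := by unfold growthRate at hg; linarith
  -- `x.1 ≤ (2q - 1) x.2.2 ≤ x.2.2` makes the first factor nonnegative
  have hfac : 0 ≤ 1 - 2 * q * x.1 - (2 * q - 1) * x.2.1 := by
    nlinarith [mul_nonneg (sub_nonneg.2 hq1) h1.le, mul_nonneg (sub_nonneg.2 hq1) h2.le,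
      mul_nonneg (sub_nonneg.2 hq1) h3.le]
  have := sub_nonneg.2 h
  positivity

theorem exists_tendsto_iterate_of_fst_le_snd (hq0 : 0 < q) (hq1 : q ≤ 1) {p : ℝ × ℝ × ℝ}
    (hp : p ∈ simplex2) (h : p.1 ≤ p.2.1) :
    ∃ l, Tendsto (fun n ↦ (Gmap q)^[n] p) atTop (𝓝 l) := by
  set x : ℕ → ℝ × ℝ × ℝ := fun n ↦ (Gmap q)^[n] p
  have hx : ∀ n, x (n + 1) = Gmap q (x n) := fun n ↦ iterate_succ_apply' _ _ _
  have hS : ∀ n, x n ∈ simplex2 := fun n ↦ (mapsTo_Gmap_simplex2 hq0.le hq1).iterate n hp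
  have hO : ∀ n, (x n).1 ≤ (x n).2.1 := fun n ↦ by
    induction n with
    | zero => exact h
    | succ n ih => rw [hx]; exact Gmap_fst_le_snd hq0.le (hS n) ih
  have hsnd : ∀ n, (x (n + 1)).2.1 = (x n).2.1 * (1 + growthRate q (x n)) := fun n ↦ by
    rw [hx]; exact Gmap_snd_eq (hS n).1
  obtain ⟨M, hM⟩ := exists_tendsto_of_monotone_on_forward_invariant
    (P := fun n ↦ 0 ≤ growthRate q (x n)) (u := fun n ↦ (x n).2.1) (a := 0) (b := 1)
    (fun n hn ↦ by rw [hx]; exact growthRate_Gmap_nonneg hq0.le hq1 (hS n) (hO n) hn)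
    (fun n hn ↦ by rw [hsnd]; nlinarith [(hS n).2.2.1])
    (fun n hn ↦ by rw [hsnd]; nlinarith [(hS n).2.2.1, not_le.1 hn])
    (fun n ↦ by obtain ⟨hs, h1, h2, h3⟩ := hS n; exact ⟨h2.le, by linarith⟩)
  obtain ⟨a, ha⟩ : ∃ a, Tendsto (fun n ↦ (x n).1) atTop (𝓝 a) := by
    rcases eq_or_ne M 0 with rfl | hM0
    · exact ⟨0, squeeze_zero (fun n ↦ (hS n).2.1.le) hO hM⟩
    · have hg := tendsto_zero_of_succ_eq_mul_one_add hsnd hM hM0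
      refine ⟨_, ((((tendsto_const_nhds (x := 1)).sub hM).const_mul (2 * q - 1)).sub hg).div_const
        (2 * q) |>.congr fun n ↦ ?_⟩
      have hs := (hS n).1
      simp only [growthRate]
      field_simp
      linear_combination (1 - 2 * q) * hs
  exact ⟨_, tendsto_of_sum_eq_one (fun n ↦ (hS n).1) ha hM⟩

theorem exists_tendsto_iterate (hq0 : 0 < q) (hq1 : q ≤ 1) {p : ℝ × ℝ × ℝ}
    (hp : p ∈ simplex2) : ∃ l, Tendsto (fun n ↦ (Gmap q)^[n] p) atTop (𝓝 l) := by
  rcases le_total p.1 p.2.1 with h | h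
  · exact exists_tendsto_iterate_of_fst_le_snd hq0 hq1 hp h
  · obtain ⟨l, hl⟩ :=
      exists_tendsto_iterate_of_fst_le_snd hq0 hq1 (swap12_mem_simplex2 hp) h
    refine ⟨swap12 l, ((continuous_swap12.tendsto l).comp hl).congr fun n ↦ ?_⟩
    rw [comp_apply, ((semiconj_swap12_Gmap q).iterate_right n).eq, swap12_swap12]

end

/-- For every q ∈ (0,1) and every p ∈ Δ₂, the iterates G^n(p) converge to a
point of the closed simplex. -/
theorem iteratesG_converge (q : ℝ) (hq0 : 0 < q) (hq1 : q < 1)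
    (p : ℝ × ℝ × ℝ) (hp : p ∈ simplex2) :
    ∃ l : ℝ × ℝ × ℝ, (l.1 + l.2.1 + l.2.2 = 1 ∧ 0 ≤ l.1 ∧ 0 ≤ l.2.1 ∧ 0 ≤ l.2.2) ∧
      Tendsto (fun n => (Gmap q)^[n] p) atTop (𝓝 l) := by
  obtain ⟨l, hl⟩ := exists_tendsto_iterate hq0 hq1.le hp
  refine ⟨l, isClosed_closedSimplex.mem_of_tendsto hl (Eventually.of_forall fun n ↦ ?_), hl⟩
  obtain ⟨hs, h1, h2, h3⟩ := (mapsTo_Gmap_simplex2 hq0.le hq1.le).iterate n hp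
  exact ⟨hs, h1.le, h2.le, h3.le⟩
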